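/- If there exists a set of vertex-disjoint paths in the dynamic graph D_l(A,B) from a subset J of the input vertices V_B to a subset I of the first-layer state vertices V_X with |I| = |J| = r, and this linking is the unique (J,I)-linking in D_l(A,B), then the generic rank of C_l(A,B) is at least r. -/

import Mathlib

open Finset

/-- The `k`-step controllability matrix `C_k(A,B) = [B, AB, ..., A^{k-1}B]`. -/
noncomputable def ctrlMat {n m : ℕ}
    (A : Matrix (Fin n) (Fin n) ℝ) (B : Matrix (Fin n) (Fin m) ℝ) (k : ℕ) :
    Matrix (Fin n) (Fin k × Fin m) ℝ :=
  fun i jc => (A ^ (jc.1 : ℕ) * B) i jc.2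

/-- `M` is a realization of the zero-nonzero pattern `p`: entries outside the
pattern are fixed zeros. -/
def Realizes {α β : Type*} (p : α → β → Prop) (M : Matrix α β ℝ) : Prop :=
  ∀ i j, ¬ p i j → M i j = 0

/-- `x = (π, σ)` is a `(J,I)`-linking of the dynamic graph `D_l(A,B)` of the
structured pair with patterns `pA, pB`: a family of pairwise vertex-disjoint
paths, the `a`-th going from the input vertex of column `Jf (π a)` to the
first-layer state vertex `If a`, using only edges corresponding to nonzero
entries of the patterns. Values of `σ a` beyond the top layer of the `a`-th
path are frozen so that the representation is unique. -/
def IsPatternLinking {n m l r : ℕ}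
    (pA : Fin n → Fin n → Prop) (pB : Fin n → Fin m → Prop)
    (If : Fin r → Fin n) (Jf : Fin r → Fin l × Fin m)
    (x : Equiv.Perm (Fin r) × (Fin r → ℕ → Fin n)) : Prop :=
  (∀ a, x.2 a 0 = If a) ∧
  (∀ a t, ((Jf (x.1 a)).1 : ℕ) ≤ t → x.2 a t = x.2 a ((Jf (x.1 a)).1 : ℕ)) ∧
  (∀ a b, a ≠ b → ∀ t, t ≤ ((Jf (x.1 a)).1 : ℕ) → t ≤ ((Jf (x.1 b)).1 : ℕ) →
    x.2 a t ≠ x.2 b t) ∧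
  (∀ a, pB (x.2 a ((Jf (x.1 a)).1 : ℕ)) (Jf (x.1 a)).2) ∧
  (∀ a, ∀ t, t < ((Jf (x.1 a)).1 : ℕ) → pA (x.2 a t) (x.2 a (t + 1)))

/-!
Take the 0/1 indicator matrices of the two patterns. The entry of `C_l` in row `i` and column
`(k, j)` is `(A ^ k * B) i j`, a sum over walks of length `k`; padding every walk with identity
steps up to length `l` turns the `r × r` minor with rows `I` and columns `J` into a signed sum
over families of paths living on common time layers. The Lindström–Gessel–Viennot involution
(exchange the initial segments of two paths at their first meeting) cancels all intersecting
families, and a non-intersecting family has nonzero weight exactly when it is a `(J,I)`-linking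
of the patterns. The linking being unique, the minor consists of a single nonzero term, so the
rank is at least `r`.
-/

open Finset Matrix Equiv

namespace LGV

section Splice

variable {V : Type*} {N : ℕ}

def splice (p p' : Fin (N + 1) → V) (q : Fin (N + 1)) : Fin (N + 1) → V :=
  fun t => if t ≤ q then p t else p' t

variable {p p' : Fin (N + 1) → V} {q t : Fin (N + 1)}

theorem splice_of_le (ht : t ≤ q) : splice p p' q t = p t := if_pos ht

theorem splice_of_lt (ht : q < t) : splice p p' q t = p' t := if_neg (not_le.2 ht)

theorem splice_of_ge (hq : p q = p' q) (ht : q ≤ t) : splice p p' q t = p' t := by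
  rcases ht.eq_or_lt with rfl | ht
  · exact (splice_of_le le_rfl).trans hq
  · exact splice_of_lt ht

theorem splice_self : splice p p q = p := funext fun _ => ite_self _

end Splice

section Weight

variable {R V : Type*} [CommRing R] {N : ℕ}

def pathWeight (u : V → R) (M : Fin N → Matrix V V R) (v : V → R) (p : Fin (N + 1) → V) :
    R :=
  u (p 0) * (∏ t, M t (p t.castSucc) (p t.succ)) * v (p (Fin.last N))

theorem sum_pathWeight [Fintype V] [DecidableEq V] (u : V → R) (M : Fin N → Matrix V V R)
    (v : V → R) :
    ∑ p, pathWeight u M v p = u ⬝ᵥ ((List.ofFn M).prod *ᵥ v) := by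
  induction N generalizing u with
  | zero =>
    rw [← (Equiv.funUnique (Fin 1) V).symm.sum_comp]
    simp [pathWeight, dotProduct]
  | succ N ih =>
    rw [← (Fin.consEquiv fun _ => V).sum_comp, Fintype.sum_prod_type, sum_comm, List.ofFn_succ,
      List.prod_cons, ← mulVec_mulVec, dotProduct_mulVec, ← ih]
    refine sum_congr rfl fun p _ => ?_
    simp only [pathWeight, Fin.consEquiv_apply, Fin.prod_univ_succ, Fin.castSucc_zero,
      Fin.cons_zero, Fin.cons_succ, ← Fin.succ_castSucc, ← Fin.succ_last, vecMul, dotProduct,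
      sum_mul]
    exact sum_congr rfl fun x _ => by ring

def headWeight (u : V → R) (M : Fin N → Matrix V V R) (p : Fin (N + 1) → V)
    (q : Fin (N + 1)) : R :=
  u (p 0) * ∏ t with t.castSucc < q, M t (p t.castSucc) (p t.succ)

def tailWeight (M : Fin N → Matrix V V R) (v : V → R) (p : Fin (N + 1) → V)
    (q : Fin (N + 1)) : R :=
  (∏ t with ¬t.castSucc < q, M t (p t.castSucc) (p t.succ)) * v (p (Fin.last N))

variable {u : V → R} {M : Fin N → Matrix V V R} {v : V → R} {p p' : Fin (N + 1) → V}
  {q : Fin (N + 1)}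

theorem pathWeight_splice (hq : p q = p' q) :
    pathWeight u M v (splice p p' q) = headWeight u M p q * tailWeight M v p' q := by
  have hhead : ∀ t ∈ univ.filter (fun t : Fin N => t.castSucc < q),
      M t (splice p p' q t.castSucc) (splice p p' q t.succ) =
        M t (p t.castSucc) (p t.succ) := by
    intro t ht
    have ht : t.castSucc < q := (mem_filter.1 ht).2
    rw [splice_of_le ht.le, splice_of_le (Fin.castSucc_lt_iff_succ_le.1 ht)]
  have htail : ∀ t ∈ univ.filter (fun t : Fin N => ¬t.castSucc < q),
      M t (splice p p' q t.castSucc) (splice p p' q t.succ) =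
        M t (p' t.castSucc) (p' t.succ) := by
    intro t ht
    have ht : q ≤ t.castSucc := not_lt.1 (mem_filter.1 ht).2
    rw [splice_of_ge hq ht, splice_of_ge hq (ht.trans Fin.castSucc_lt_succ.le)]
  rw [pathWeight, ← prod_filter_mul_prod_filter_not univ (fun t : Fin N => t.castSucc < q),
    prod_congr rfl hhead, prod_congr rfl htail, splice_of_le (Fin.zero_le q),
    splice_of_ge hq (Fin.le_last q), headWeight, tailWeight]
  ring

theorem pathWeight_eq_headWeight_mul_tailWeight (q : Fin (N + 1)) :
    pathWeight u M v p = headWeight u M p q * tailWeight M v p q := by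
  rw [← pathWeight_splice rfl, splice_self]

theorem headWeight_congr {M' : Fin N → Matrix V V R}
    (h : ∀ t : Fin N, t.castSucc < q → M t = M' t) :
    headWeight u M p q = headWeight u M' p q := by
  rw [headWeight, headWeight, prod_congr rfl fun t ht => by rw [h t (mem_filter.1 ht).2]]

theorem pathWeight_ne_zero_iff [IsDomain R] :
    pathWeight u M v p ≠ 0 ↔
      u (p 0) ≠ 0 ∧ (∀ t, M t (p t.castSucc) (p t.succ) ≠ 0) ∧
        v (p (Fin.last N)) ≠ 0 := by
  simp only [pathWeight, ne_eq, mul_eq_zero, prod_eq_zero_iff, mem_univ, true_and, not_or,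
    not_exists, and_assoc]

end Weight

theorem swap_apply_mem {ι : Type*} [DecidableEq ι] {s : Set ι} {i j c : ι} (hi : i ∈ s)
    (hj : j ∈ s) (hc : c ∈ s) : swap i j c ∈ s := by
  rw [swap_apply_def]
  split_ifs <;> assumption

theorem apply_swap_eq_of_eq {ι β : Type*} [DecidableEq ι] {f : ι → β} {i j : ι}
    (hf : f i = f j) (c : ι) : f (swap i j c) = f c := by
  rw [swap_apply_def]
  split_ifs with hi hj
  · rw [hi, hf]
  · rw [hj, hf]
  · rfl

section Families

variable {V ι : Type*} {N : ℕ} (top : ι → Fin (N + 1))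

-- `top c` is the time at which the path of column `c` leaves for its input vertex; later
-- layers are padding, so coincidences there are not meetings.
def Meets (h : ι → Fin (N + 1) → V) (c d : ι) (t : Fin (N + 1)) : Prop :=
  c ≠ d ∧ t ≤ top c ∧ t ≤ top d ∧ h c t = h d t

def NonIntersecting (h : ι → Fin (N + 1) → V) : Prop :=
  ∀ c d t, ¬Meets top h c d t

instance [Fintype ι] [DecidableEq ι] [DecidableEq V] :
    DecidablePred (NonIntersecting top : (ι → Fin (N + 1) → V) → Prop) := fun h => by
  unfold NonIntersecting Meets
  infer_instance

def IsFirstMeeting (h : ι → Fin (N + 1) → V) (m : Fin (N + 1) × ι × ι) : Prop :=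
  Meets top h m.2.1 m.2.2 m.1 ∧ ∀ c d t, Meets top h c d t → m.1 ≤ t

variable {top}

theorem exists_isFirstMeeting {h : ι → Fin (N + 1) → V} (hh : ¬NonIntersecting top h) :
    ∃ m, IsFirstMeeting top h m := by
  simp only [NonIntersecting, not_forall, not_not] at hh
  obtain ⟨c, d, t, hm⟩ := hh
  obtain ⟨q, ⟨i, j, hij⟩, hmin⟩ :=
    wellFounded_lt.has_min {t | ∃ c d, Meets top h c d t} ⟨t, c, d, hm⟩
  exact ⟨(q, i, j), hij, fun c d t hm => not_lt.1 (hmin t ⟨c, d, hm⟩)⟩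

variable (top) in
noncomputable def firstMeeting (h : ι → Fin (N + 1) → V) (hh : ¬NonIntersecting top h) :
    Fin (N + 1) × ι × ι :=
  (exists_isFirstMeeting hh).choose

theorem isFirstMeeting_firstMeeting {h : ι → Fin (N + 1) → V} (hh : ¬NonIntersecting top h) :
    IsFirstMeeting top h (firstMeeting top h hh) :=
  (exists_isFirstMeeting hh).choose_spec

variable [DecidableEq ι]

def swapHeads (h : ι → Fin (N + 1) → V) (i j : ι) (q : Fin (N + 1)) (c : ι) :
    Fin (N + 1) → V :=
  splice (h (swap i j c)) (h c) q

variable {h : ι → Fin (N + 1) → V} {i j c d : ι} {q t : Fin (N + 1)}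

theorem swapHeads_of_le (ht : t ≤ q) : swapHeads h i j q c t = h (swap i j c) t :=
  splice_of_le ht

theorem swapHeads_of_lt (ht : q < t) : swapHeads h i j q c t = h c t :=
  splice_of_lt ht

theorem swapHeads_of_ge (hq : h i q = h j q) (ht : q ≤ t) : swapHeads h i j q c t = h c t :=
  splice_of_ge (apply_swap_eq_of_eq (f := fun c => h c q) hq c) ht

theorem swapHeads_swapHeads : swapHeads (swapHeads h i j q) i j q = h := by
  funext c t
  rcases le_or_gt t q with ht | ht
  · rw [swapHeads_of_le ht, swapHeads_of_le ht, swap_apply_self]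
  · rw [swapHeads_of_lt ht, swapHeads_of_lt ht]

-- Swapping heads at the first meeting `q` only permutes the meetings before `q`, of which
-- there are none, so the meetings and hence the first meeting are unchanged.
theorem meets_swapHeads_iff {m : Fin (N + 1) × ι × ι} (hm : IsFirstMeeting top h m) :
    Meets top (swapHeads h m.2.1 m.2.2 m.1) c d t ↔ Meets top h c d t := by
  obtain ⟨q, i, j⟩ := m
  obtain ⟨⟨-, hqi, hqj, hij⟩, hmin⟩ := hm
  rcases lt_or_ge t q with ht | ht
  · have hnone : ∀ c d, ¬Meets top h c d t := fun c d hcd => (hmin c d t hcd).not_gt ht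
    refine ⟨fun ⟨hcd, hc, hd, he⟩ =>
      (hnone (swap i j c) (swap i j d) ⟨?_, ?_, ?_, ?_⟩).elim,
      fun hcd => (hnone c d hcd).elim⟩
    · exact (swap i j).injective.ne hcd
    · exact swap_apply_mem (s := {x | t ≤ top x}) (ht.le.trans hqi) (ht.le.trans hqj) hc
    · exact swap_apply_mem (s := {x | t ≤ top x}) (ht.le.trans hqi) (ht.le.trans hqj) hd
    · rwa [swapHeads_of_le ht.le, swapHeads_of_le ht.le] at he
  · simp only [Meets, swapHeads_of_ge hij ht]

theorem isFirstMeeting_swapHeads {m : Fin (N + 1) × ι × ι} (hm : IsFirstMeeting top h m) :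
    IsFirstMeeting top (swapHeads h m.2.1 m.2.2 m.1) = IsFirstMeeting top h := by
  funext m'
  simp only [IsFirstMeeting, meets_swapHeads_iff hm]

def swapAt (x : Perm ι × (ι → Fin (N + 1) → V)) (m : Fin (N + 1) × ι × ι) :
    Perm ι × (ι → Fin (N + 1) → V) :=
  (x.1 * swap m.2.1 m.2.2, swapHeads x.2 m.2.1 m.2.2 m.1)

theorem swapAt_swapAt (x : Perm ι × (ι → Fin (N + 1) → V)) (m : Fin (N + 1) × ι × ι) :
    swapAt (swapAt x m) m = x := by
  simp only [swapAt, mul_assoc, Equiv.swap_mul_self, mul_one, swapHeads_swapHeads]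

theorem swapAt_ne {x : Perm ι × (ι → Fin (N + 1) → V)} {m : Fin (N + 1) × ι × ι}
    (hm : IsFirstMeeting top x.2 m) : swapAt x m ≠ x := fun h =>
  hm.1.1 (swap_eq_one_iff.1 (mul_eq_left.1 (congrArg Prod.fst h)))

theorem firstMeeting_swapAt {x : Perm ι × (ι → Fin (N + 1) → V)}
    (hx : ¬NonIntersecting top x.2)
    (hx' : ¬NonIntersecting top (swapAt x (firstMeeting top x.2 hx)).2) :
    firstMeeting top (swapAt x (firstMeeting top x.2 hx)).2 hx' =
      firstMeeting top x.2 hx := by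
  have key : ∀ {P Q : Fin (N + 1) × ι × ι → Prop} (hPQ : P = Q) (hP : ∃ m, P m)
      (hQ : ∃ m, Q m), hP.choose = hQ.choose := by
    intro P Q hPQ hP hQ
    subst hPQ
    rfl
  exact key (isFirstMeeting_swapHeads (isFirstMeeting_firstMeeting hx)) _ _

variable [Fintype ι] {R : Type*} [CommRing R]

theorem sign_mul_prod_swapAt (w : ι → ι → (Fin (N + 1) → V) → R)
    (hw : ∀ (σ : Perm ι) h i j q, IsFirstMeeting top h (q, i, j) →
      ∏ c, w (σ (swap i j c)) c (swapHeads h i j q c) = ∏ c, w (σ c) c (h c))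
    {x : Perm ι × (ι → Fin (N + 1) → V)} {m : Fin (N + 1) × ι × ι}
    (hm : IsFirstMeeting top x.2 m) :
    ((Perm.sign (swapAt x m).1 : ℤ) : R) * ∏ c, w ((swapAt x m).1 c) c ((swapAt x m).2 c) =
      -(((Perm.sign x.1 : ℤ) : R) * ∏ c, w (x.1 c) c (x.2 c)) := by
  obtain ⟨q, i, j⟩ := m
  simp only [swapAt, Perm.mul_apply, Perm.sign_mul, Perm.sign_swap hm.1.1, hw x.1 x.2 i j q hm]
  push_cast
  ring

theorem sum_sign_mul_prod_eq_zero [Fintype V] [DecidableEq V]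
    (w : ι → ι → (Fin (N + 1) → V) → R)
    (hw : ∀ (σ : Perm ι) h i j q, IsFirstMeeting top h (q, i, j) →
      ∏ c, w (σ (swap i j c)) c (swapHeads h i j q c) = ∏ c, w (σ c) c (h c)) :
    ∑ x ∈ univ.filter
        (fun x : Perm ι × (ι → Fin (N + 1) → V) => ¬NonIntersecting top x.2),
      ((Perm.sign x.1 : ℤ) : R) * ∏ c, w (x.1 c) c (x.2 c) = 0 := by
  have hmeets : ∀ (x : Perm ι × (ι → Fin (N + 1) → V)) (hx : ¬NonIntersecting top x.2),
      ¬NonIntersecting top (swapAt x (firstMeeting top x.2 hx)).2 := by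
    intro x hx hni
    have hm := isFirstMeeting_firstMeeting (h := x.2) hx
    exact hni _ _ _ ((meets_swapHeads_iff hm).2 hm.1)
  refine sum_involution (fun x hx => swapAt x (firstMeeting top x.2 (mem_filter.1 hx).2))
    (fun x hx => ?_) (fun x hx _ => swapAt_ne (isFirstMeeting_firstMeeting _))
    (fun x hx => mem_filter.2 ⟨mem_univ _, hmeets x _⟩) (fun x hx => ?_)
  · rw [sign_mul_prod_swapAt w hw (isFirstMeeting_firstMeeting _), add_neg_cancel]
  · rw [firstMeeting_swapAt, swapAt_swapAt]

theorem prod_pathWeight_swapHeads (u : ι → V → R) (M : ι → Fin N → Matrix V V R)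
    (v : ι → V → R)
    (hM : ∀ c d t, t.castSucc < top c → t.castSucc < top d → M c t = M d t) (σ : Perm ι)
    (hm : IsFirstMeeting top h (q, i, j)) :
    ∏ c, pathWeight (u (σ (swap i j c))) (M c) (v c) (swapHeads h i j q c) =
      ∏ c, pathWeight (u (σ c)) (M c) (v c) (h c) := by
  obtain ⟨⟨-, hqi, hqj, hij⟩, -⟩ := hm
  have hMswap : ∀ c t, t.castSucc < q → M c t = M (swap i j c) t := fun c t ht =>
    (apply_swap_eq_of_eq (f := fun c => M c t) (hM i j t (ht.trans_le hqi) (ht.trans_le hqj))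
      c).symm
  calc ∏ c, pathWeight (u (σ (swap i j c))) (M c) (v c) (swapHeads h i j q c)
      = ∏ c, headWeight (u (σ (swap i j c))) (M (swap i j c)) (h (swap i j c)) q *
          tailWeight (M c) (v c) (h c) q :=
        prod_congr rfl fun c _ => by
          rw [swapHeads, pathWeight_splice (apply_swap_eq_of_eq (f := fun c => h c q) hij c),
            headWeight_congr (hMswap c)]
    _ = ∏ c, headWeight (u (σ c)) (M c) (h c) q * tailWeight (M c) (v c) (h c) q := by
        rw [prod_mul_distrib, prod_mul_distrib,
          Equiv.prod_comp (swap i j) (fun c => headWeight (u (σ c)) (M c) (h c) q)]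
    _ = ∏ c, pathWeight (u (σ c)) (M c) (v c) (h c) :=
        prod_congr rfl fun c _ => (pathWeight_eq_headWeight_mul_tailWeight q).symm

variable (top) in
theorem det_eq_sum_nonIntersecting [Fintype V] [DecidableEq V] (u : ι → V → R)
    (M : ι → Fin N → Matrix V V R) (v : ι → V → R)
    (hM : ∀ c d t, t.castSucc < top c → t.castSucc < top d → M c t = M d t) :
    (Matrix.of fun a c => ∑ p, pathWeight (u a) (M c) (v c) p).det =
      ∑ x ∈ univ.filter
          (fun x : Perm ι × (ι → Fin (N + 1) → V) => NonIntersecting top x.2),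
        ((Perm.sign x.1 : ℤ) : R) * ∏ c, pathWeight (u (x.1 c)) (M c) (v c) (x.2 c) := by
  calc _ = ∑ σ : Perm ι,
          ((Perm.sign σ : ℤ) : R) * ∏ c, ∑ p, pathWeight (u (σ c)) (M c) (v c) p := by
        rw [det_apply']
        simp only [of_apply]
    _ = ∑ x : Perm ι × (ι → Fin (N + 1) → V),
          ((Perm.sign x.1 : ℤ) : R) * ∏ c, pathWeight (u (x.1 c)) (M c) (v c) (x.2 c) := by
        rw [Fintype.sum_prod_type]
        simp only [prod_univ_sum, Fintype.piFinset_univ, mul_sum]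
    _ = _ := by
        rw [← sum_filter_add_sum_filter_not univ (fun x => NonIntersecting top x.2),
          add_eq_left]
        exact sum_sign_mul_prod_eq_zero (fun a c => pathWeight (u a) (M c) (v c))
          fun σ h i j q hm => prod_pathWeight_swapHeads u M v hM σ hm

end Families

end LGV

open LGV

section ClampedPaths

variable {V : Type*} {l : ℕ}

theorem Fin.clamp_eq_mk {t : ℕ} (ht : t ≤ l) : Fin.clamp t l = ⟨t, Nat.lt_succ_of_le ht⟩ :=
  Fin.ext (min_eq_left ht)

theorem forall_step_lt_iff_clamp {P : V → V → Prop} {p : Fin (l + 1) → V} {k : ℕ}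
    (hk : k ≤ l) :
    (∀ x : Fin l, (x : ℕ) < k → P (p x.castSucc) (p x.succ)) ↔
      ∀ t < k, P (p (Fin.clamp t l)) (p (Fin.clamp (t + 1) l)) := by
  refine ⟨fun H t ht => ?_, fun H x hx => ?_⟩
  · rw [Fin.clamp_eq_mk (t := t) (by omega), Fin.clamp_eq_mk (t := t + 1) (by omega)]
    exact H ⟨t, by omega⟩ ht
  · have := H x hx
    rwa [Fin.clamp_eq_mk (t := x) (by omega), Fin.clamp_eq_mk (t := x + 1) (by omega)] at this

theorem forall_step_eq_iff_clamp_eq {p : Fin (l + 1) → V} {k : ℕ} :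
    (∀ x : Fin l, k ≤ x → p x.castSucc = p x.succ) ↔
      ∀ t, k ≤ t → p (Fin.clamp t l) = p (Fin.clamp k l) := by
  refine ⟨fun H t ht => ?_, fun H x hx => ?_⟩
  · induction t, ht using Nat.le_induction with
    | base => rfl
    | succ t ht ih =>
      rw [← ih]
      rcases lt_or_ge t l with htl | htl
      · rw [Fin.clamp_eq_mk (Nat.succ_le_of_lt htl), Fin.clamp_eq_mk htl.le]
        exact (H ⟨t, htl⟩ ht).symm
      · rw [Fin.clamp_eq_last _ _ htl, Fin.clamp_eq_last _ _ (by omega)]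
  · have hx' := x.isLt
    calc p x.castSucc = p (Fin.clamp x l) :=
          (congrArg p (Fin.clamp_eq_mk (t := x) (by omega))).symm
      _ = p (Fin.clamp k l) := H x hx
      _ = p (Fin.clamp (x + 1) l) := (H (x + 1) (by omega)).symm
      _ = p x.succ := congrArg p (Fin.clamp_eq_mk (t := x + 1) (by omega))

end ClampedPaths

section PatternRealization

variable {n m l r : ℕ}

open Classical in
noncomputable def patternMatrix {α β : Type*} (p : α → β → Prop) : Matrix α β ℝ :=
  Matrix.of fun i j => if p i j then 1 else 0

theorem realizes_patternMatrix {α β : Type*} (p : α → β → Prop) :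
    Realizes p (patternMatrix p) :=
  fun _ _ hp => if_neg hp

theorem patternMatrix_ne_zero_iff {α β : Type*} {p : α → β → Prop} {i : α} {j : β} :
    patternMatrix p i j ≠ 0 ↔ p i j := by
  simp [patternMatrix]

-- Identity steps after time `k` pad walks of length `k` to the common length `N`.
def powSteps {R V : Type*} [Semiring R] [DecidableEq V] (A : Matrix V V R) (k N : ℕ) :
    Fin N → Matrix V V R :=
  fun t => if (t : ℕ) < k then A else 1

theorem prod_ofFn_powSteps {R V : Type*} [Semiring R] [DecidableEq V] [Fintype V]
    (A : Matrix V V R) {k N : ℕ} (hk : k ≤ N) :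
    (List.ofFn (powSteps A k N)).prod = A ^ k := by
  have h : List.ofFn (powSteps A k N) = List.replicate k A ++ List.replicate (N - k) 1 := by
    refine List.ext_getElem (by simp; omega) fun t h₁ h₂ => ?_
    simp only [List.getElem_ofFn, powSteps, List.getElem_append, List.length_replicate,
      List.getElem_replicate]
    split_ifs <;> rfl
  rw [h, List.prod_append, List.prod_replicate, List.prod_replicate, one_pow, mul_one]

theorem ctrlMat_apply_eq_sum_pathWeight (A : Matrix (Fin n) (Fin n) ℝ)
    (B : Matrix (Fin n) (Fin m) ℝ) (i : Fin n) (jc : Fin l × Fin m) :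
    ctrlMat A B l i jc =
      ∑ p, pathWeight (Pi.single i 1) (powSteps A jc.1 l) (fun v => B v jc.2) p := by
  rw [sum_pathWeight, prod_ofFn_powSteps A jc.1.isLt.le, single_dotProduct, one_mul]
  rfl

def IsPatternPath (pA : Fin n → Fin n → Prop) (pB : Fin n → Fin m → Prop) (i : Fin n)
    (k : ℕ) (j : Fin m) (P : ℕ → Fin n) : Prop :=
  P 0 = i ∧ (∀ t, k ≤ t → P t = P k) ∧ pB (P k) j ∧
    ∀ t, t < k → pA (P t) (P (t + 1))

variable {pA : Fin n → Fin n → Prop} {pB : Fin n → Fin m → Prop} {If : Fin r → Fin n}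
  {Jf : Fin r → Fin l × Fin m}

theorem isPatternLinking_iff {x : Equiv.Perm (Fin r) × (Fin r → ℕ → Fin n)} :
    IsPatternLinking pA pB If Jf x ↔
      (∀ a b, a ≠ b → ∀ t, t ≤ ((Jf (x.1 a)).1 : ℕ) → t ≤ ((Jf (x.1 b)).1 : ℕ) →
        x.2 a t ≠ x.2 b t) ∧
      ∀ a, IsPatternPath pA pB (If a) (Jf (x.1 a)).1 (Jf (x.1 a)).2 (x.2 a) := by
  simp only [IsPatternLinking, IsPatternPath, forall_and]
  tauto

theorem pathWeight_patternMatrix_ne_zero_iff {p : Fin (l + 1) → Fin n} {i : Fin n} {k : Fin l}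
    {j : Fin m} :
    pathWeight (Pi.single i 1) (powSteps (patternMatrix pA) k l) (fun v => patternMatrix pB v j)
        p ≠ 0 ↔
      IsPatternPath pA pB i k j (fun t => p (Fin.clamp t l)) := by
  have hk := k.isLt
  have hstep : ∀ t : Fin l, powSteps (patternMatrix pA) k l t (p t.castSucc) (p t.succ) ≠ 0 ↔
      ((t : ℕ) < k → pA (p t.castSucc) (p t.succ)) ∧
        ((k : ℕ) ≤ t → p t.castSucc = p t.succ) := by
    intro t
    by_cases ht : (t : ℕ) < k
    · simp [powSteps, ht, not_le.2 ht, patternMatrix_ne_zero_iff]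
    · simp [powSteps, ht, not_lt.1 ht, one_apply]
  rw [pathWeight_ne_zero_iff]
  simp only [hstep, forall_and, Pi.single_apply, ne_eq, ite_eq_right_iff, one_ne_zero, imp_false,
    not_not, patternMatrix_ne_zero_iff, IsPatternPath, Fin.clamp_eq_mk (Nat.zero_le l)]
  refine and_congr_right fun _ => ?_
  rw [forall_step_lt_iff_clamp hk.le, forall_step_eq_iff_clamp_eq]
  have hlast : Fin.clamp l l = Fin.last l := Fin.clamp_eq_mk le_rfl
  constructor
  · rintro ⟨⟨hA', hF⟩, hB⟩
    refine ⟨hF, ?_, hA'⟩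
    rwa [← hF l hk.le, hlast]
  · rintro ⟨hF, hB, hA'⟩
    refine ⟨⟨hA', hF⟩, ?_⟩
    rwa [← hlast, hF l hk.le]

def toLinking (σ : Equiv.Perm (Fin r)) (h : Fin r → Fin (l + 1) → Fin n) :
    Equiv.Perm (Fin r) × (Fin r → ℕ → Fin n) :=
  (σ⁻¹, fun a t => h (σ⁻¹ a) (Fin.clamp t l))

theorem isPatternLinking_toLinking_iff {σ : Equiv.Perm (Fin r)}
    {h : Fin r → Fin (l + 1) → Fin n} :
    IsPatternLinking pA pB If Jf (toLinking σ h) ↔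
      NonIntersecting (fun c => (Jf c).1.castSucc) h ∧
        ∀ c, pathWeight (Pi.single (If (σ c)) 1) (powSteps (patternMatrix pA) (Jf c).1 l)
          (fun v => patternMatrix pB v (Jf c).2) (h c) ≠ 0 := by
  simp only [isPatternLinking_iff, pathWeight_patternMatrix_ne_zero_iff]
  refine and_congr ⟨fun H c d t ⟨hcd, hc, hd, he⟩ => ?_, fun H a b hab t ha hb he => ?_⟩
    ⟨fun H c => ?_, fun H a => ?_⟩
  · exact H (σ c) (σ d) (σ.injective.ne hcd) t (by simpa [toLinking, Fin.le_def] using hc)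
      (by simpa [toLinking, Fin.le_def] using hd)
      (by simpa [toLinking, Fin.clamp_eq_mk (Nat.lt_succ_iff.1 t.isLt)] using he)
  · refine H (σ⁻¹ a) (σ⁻¹ b) (Fin.clamp t l) ⟨σ⁻¹.injective.ne hab, ?_, ?_, he⟩ <;>
      simp only [Fin.le_def, Fin.clamp, Fin.val_castSucc]
    · exact (min_le_left _ _).trans ha
    · exact (min_le_left _ _).trans hb
  · simpa [toLinking] using H (σ c)
  · simpa [toLinking] using H (σ⁻¹ a)

theorem toLinking_inj {σ σ' : Equiv.Perm (Fin r)} {h h' : Fin r → Fin (l + 1) → Fin n}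
    (e : toLinking σ h = toLinking σ' h') : σ = σ' ∧ h = h' := by
  obtain rfl : σ = σ' := inv_injective (congrArg Prod.fst e)
  refine ⟨rfl, funext fun c => funext fun t => ?_⟩
  have := congrFun (congrFun (congrArg Prod.snd e) (σ c)) t
  simpa [toLinking, Fin.clamp_eq_mk (Nat.lt_succ_iff.1 t.isLt)] using this

theorem exists_toLinking_eq {x : Equiv.Perm (Fin r) × (Fin r → ℕ → Fin n)}
    (hx : IsPatternLinking pA pB If Jf x) :
    ∃ y : Equiv.Perm (Fin r) × (Fin r → Fin (l + 1) → Fin n), toLinking y.1 y.2 = x := by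
  refine ⟨(x.1⁻¹, fun c s => x.2 (x.1⁻¹ c) s), Prod.ext (inv_inv _) (funext fun a =>
    funext fun t => ?_)⟩
  simp only [toLinking, inv_inv, Perm.coe_inv, symm_apply_apply]
  rcases le_total t l with ht | ht
  · simp [Fin.clamp_eq_mk ht]
  · have hk := (Jf (x.1 a)).1.isLt
    rw [hx.2.1 a (Fin.clamp t l) (by simp [Fin.clamp]; omega), hx.2.1 a t (by omega)]

theorem det_submatrix_ctrlMat_patternMatrix_ne_zero
    {x₀ : Equiv.Perm (Fin r) × (Fin r → ℕ → Fin n)}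
    (hx₀ : IsPatternLinking pA pB If Jf x₀)
    (huniq : ∀ x, IsPatternLinking pA pB If Jf x → x = x₀) :
    ((ctrlMat (patternMatrix pA) (patternMatrix pB) l).submatrix If Jf).det ≠ 0 := by
  have hM : ∀ c d (t : Fin l), t.castSucc < (Jf c).1.castSucc →
      t.castSucc < (Jf d).1.castSucc →
      powSteps (patternMatrix pA) (Jf c).1 l t = powSteps (patternMatrix pA) (Jf d).1 l t := by
    intro c d t hc hd
    rw [Fin.castSucc_lt_castSucc_iff, Fin.lt_def] at hc hd
    rw [powSteps, powSteps, if_pos hc, if_pos hd]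
  obtain ⟨y₀, hy₀⟩ := exists_toLinking_eq hx₀
  have hy₀' := isPatternLinking_toLinking_iff.1 (hy₀ ▸ hx₀)
  have hsub : (ctrlMat (patternMatrix pA) (patternMatrix pB) l).submatrix If Jf =
      Matrix.of fun a c => ∑ p, pathWeight (Pi.single (If a) 1)
        (powSteps (patternMatrix pA) (Jf c).1 l) (fun v => patternMatrix pB v (Jf c).2) p :=
    Matrix.ext fun a c => ctrlMat_apply_eq_sum_pathWeight _ _ (If a) (Jf c)
  rw [hsub, det_eq_sum_nonIntersecting (fun c => (Jf c).1.castSucc) _ _ _ hM,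
    sum_eq_single_of_mem y₀ (mem_filter.2 ⟨mem_univ _, hy₀'.1⟩)]
  · exact mul_ne_zero (Int.cast_ne_zero.2 (Units.ne_zero _))
      (prod_ne_zero_iff.2 fun c _ => hy₀'.2 c)
  · intro y hy hne
    by_contra hz
    have hlink := isPatternLinking_toLinking_iff.2 ⟨(mem_filter.1 hy).2,
      fun c => prod_ne_zero_iff.1 (right_ne_zero_of_mul hz) c (mem_univ c)⟩
    obtain ⟨h₁, h₂⟩ := toLinking_inj ((huniq _ hlink).trans hy₀.symm)
    exact hne (Prod.ext h₁ h₂)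

end PatternRealization

theorem genericRank_ge_of_unique_linking_general {n m l r : ℕ}
    (pA : Fin n → Fin n → Prop) (pB : Fin n → Fin m → Prop)
    (If : Fin r → Fin n) (Jf : Fin r → Fin l × Fin m)
    (x₀ : Equiv.Perm (Fin r) × (Fin r → ℕ → Fin n))
    (hx₀ : IsPatternLinking pA pB If Jf x₀)
    (huniq : ∀ x, IsPatternLinking pA pB If Jf x → x = x₀) :
    ∃ (A : Matrix (Fin n) (Fin n) ℝ) (B : Matrix (Fin n) (Fin m) ℝ),
      Realizes pA A ∧ Realizes pB B ∧ r ≤ (ctrlMat A B l).rank := by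
  refine ⟨patternMatrix pA, patternMatrix pB, realizes_patternMatrix pA,
    realizes_patternMatrix pB, ?_⟩
  have hdet := det_submatrix_ctrlMat_patternMatrix_ne_zero hx₀ huniq
  calc r = ((ctrlMat (patternMatrix pA) (patternMatrix pB) l).submatrix If Jf).rank := by
        rw [rank_of_isUnit _ ((isUnit_iff_isUnit_det _).2 hdet.isUnit), Fintype.card_fin]
    _ ≤ _ := rank_submatrix_le _ _ _

/-- If the dynamic graph `D_l(A,B)` of a structured pair contains a
vertex-disjoint linking of size `r` from a set `J` of input vertices to a set
`I` of first-layer state vertices, and this is the unique `(J,I)`-linking, then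
the generic rank of `C_l(A,B)` is at least `r`: some realization attains
rank `≥ r`. -/
theorem genericRank_ge_of_unique_linking {n m l r : ℕ}
    (pA : Fin n → Fin n → Prop) (pB : Fin n → Fin m → Prop)
    (If : Fin r → Fin n) (Jf : Fin r → Fin l × Fin m)
    (hI : Function.Injective If) (hJ : Function.Injective Jf)
    (x₀ : Equiv.Perm (Fin r) × (Fin r → ℕ → Fin n))
    (hx₀ : IsPatternLinking pA pB If Jf x₀)
    (huniq : ∀ x, IsPatternLinking pA pB If Jf x → x = x₀) :
    ∃ (A : Matrix (Fin n) (Fin n) ℝ) (B : Matrix (Fin n) (Fin m) ℝ),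
      Realizes pA A ∧ Realizes pB B ∧ r ≤ (ctrlMat A B l).rank :=
  genericRank_ge_of_unique_linking_general pA pB If Jf x₀ hx₀ huniq
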